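/- For every integer p ≥ 0, the double sum over i from 1 to p+1 and over k from 2i-1 to 2p+1 of i·2^(-k)·C(k+2, 2i+1) equals p² + (3/2)p + 1/2. -/

import Mathlib

/-!
Swapping the two sums, the inner sum over `i` is `2^(-k) ∑ᵢ i C(k+2, 2i+1)`. The odd- and
even-indexed binomial coefficients of a row `n ≥ 1` each sum to `2^(n-1)`, and the absorption
identity `(2i+1) C(k+2, 2i+1) = (k+2) C(k+1, 2i)` turns this into `∑ᵢ i C(k+2, 2i+1) = k 2^(k-1)`.
Hence the `k`-th column contributes `k/2`, and summing `k/2` over `0 ≤ k ≤ 2p+1` gives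
`(p+1)(2p+1)/2`.
-/

open Finset

theorem Finset.sum_range_two_mul {M : Type*} [AddCommMonoid M] (f : ℕ → M) (m : ℕ) :
    ∑ j ∈ range (2 * m), f j = ∑ i ∈ range m, (f (2 * i) + f (2 * i + 1)) := by
  induction m with
  | zero => simp
  | succ m ih =>
    rw [mul_add, mul_one, sum_range_succ, sum_range_succ, sum_range_succ, ih, add_assoc]

namespace Nat

theorem sum_range_choose_even_add_choose_odd {n m : ℕ} (h : n < 2 * m) :
    ∑ i ∈ range m, (n.choose (2 * i) + n.choose (2 * i + 1)) = 2 ^ n := by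
  rw [← sum_range_two_mul, ← sum_range_choose]
  refine (sum_subset (range_subset_range.2 (by omega)) fun j _ hj => ?_).symm
  exact choose_eq_zero_of_lt (by simpa using hj)

theorem sum_range_choose_odd {n m : ℕ} (h : n < 2 * m) :
    ∑ i ∈ range m, (n + 1).choose (2 * i + 1) = 2 ^ n := by
  simp only [choose_succ_succ']
  exact sum_range_choose_even_add_choose_odd h

theorem sum_range_choose_even {n m : ℕ} (h : n + 1 < 2 * m) :
    ∑ i ∈ range m, (n + 1).choose (2 * i) = 2 ^ n := by
  have hall := sum_range_choose_even_add_choose_odd h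
  rw [sum_add_distrib, sum_range_choose_odd (by omega), pow_succ] at hall
  omega

theorem two_mul_sum_range_mul_choose_odd {k m : ℕ} (h : k + 2 ≤ 2 * m) :
    2 * ∑ i ∈ range m, i * (k + 2).choose (2 * i + 1) = k * 2 ^ k := by
  have hodd := sum_range_choose_odd (n := k + 1) (m := m) (by omega)
  have habs : ∑ i ∈ range m, (2 * i + 1) * (k + 2).choose (2 * i + 1) = (k + 2) * 2 ^ k := by
    rw [← sum_range_choose_even (n := k) (m := m) (by omega), mul_sum]
    exact sum_congr rfl fun i _ => by rw [mul_comm, ← add_one_mul_choose_eq]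
  simp only [add_mul, one_mul, sum_add_distrib, hodd, mul_assoc, ← mul_sum] at habs
  rw [pow_succ] at habs
  linarith

end Nat

theorem double_sum_i2_odd (p : ℕ) :
    ∑ i ∈ Finset.Icc 1 (p + 1), ∑ k ∈ Finset.Icc (2 * i - 1) (2 * p + 1),
        (i : ℚ) * (2 : ℚ) ^ (-(k : ℤ)) * Nat.choose (k + 2) (2 * i + 1) =
      (p : ℚ) ^ 2 + (3 / 2) * (p : ℚ) + 1 / 2 := by
  have extend_k : ∀ i ∈ Icc 1 (p + 1), ∑ k ∈ Icc (2 * i - 1) (2 * p + 1),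
        (i : ℚ) * (2 : ℚ) ^ (-(k : ℤ)) * Nat.choose (k + 2) (2 * i + 1) =
      ∑ k ∈ range (2 * p + 2), (i : ℚ) * (2 : ℚ) ^ (-(k : ℤ)) * Nat.choose (k + 2) (2 * i + 1) := by
    intro i hi
    refine sum_subset (fun k hk => by simp at hk ⊢; omega) fun k hk hk' => ?_
    rw [Nat.choose_eq_zero_of_lt (by simp at hi hk hk'; omega), Nat.cast_zero, mul_zero]
  have column : ∀ k ∈ range (2 * p + 2), ∑ i ∈ range (p + 2),
        (i : ℚ) * (2 : ℚ) ^ (-(k : ℤ)) * Nat.choose (k + 2) (2 * i + 1) = k / 2 := by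
    intro k hk
    have key := congrArg (Nat.cast (R := ℚ))
      (Nat.two_mul_sum_range_mul_choose_odd (k := k) (m := p + 2) (by simp at hk; omega))
    push_cast at key
    simp only [zpow_neg, zpow_natCast, mul_right_comm _ ((2 : ℚ) ^ k)⁻¹, ← sum_mul]
    field_simp
    linarith
  have gauss := congrArg (Nat.cast (R := ℚ)) (sum_range_id_mul_two (2 * p + 2))
  rw [show 2 * p + 2 - 1 = 2 * p + 1 by omega] at gauss
  push_cast at gauss
  rw [sum_congr rfl extend_k, sum_subset (s₂ := range (p + 2)) (fun i hi => by simp at hi ⊢; omega),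
    sum_comm, sum_congr rfl column, ← sum_div]
  · linarith
  · intro i hi hi'
    obtain rfl : i = 0 := by simp at hi hi'; omega
    simp
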